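/- arXiv:2210.01290 — 2 statements merged into one kernel-verified Lean document; each statement's English description precedes it below -/
import Mathlib

section
/- Let w₁, w₂ ∈ (0,1) and a₁, a₂, a₃, a₄ > 0. Define the polynomials r₁ := 2w₂²−w₂+1, r₂ := −2w₂²+w₂+1, r₃ := −2w₁²+w₁+1, r₄ := 2w₁²−w₁+1, r₅ := −w₂(2w₁²−w₁−1), r₆ := (w₂−1)(2w₁²−w₁−1), r₇ := w₂(2w₁²−w₁+1), r₈ := −(w₂−1)(2w₁²−w₁+1), r₉ := −(2w₂²−w₂+1)(w₁−1), r₁₀ := (2w₂²−w₂−1)(w₁−1), r₁₁ := (2w₂²−w₂+1)w₁, r₁₂ := −(2w₂²−w₂−1)w₁, s₁ := 2(w₁−1)(w₁w₂+w₂²+w₁+1), s₂ := 2(1−w₂)(w₁−1)(w₁+w₂+1), s₃ := −2(w₂+1)w₁²−2(w₂²−w₂)w₁−2w₂²−2, s₄ := 2(w₂−1)(w₁²+w₁w₂+w₂+1), and β := −(a₁a₂s₄ + a₁a₃s₃ + a₂²s₂ + a₂a₃s₁). Define the stencil C₋₁,₀ := −(a₁a₂r₂ + a₁a₃r₁)/β,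 C₀,−1 := −(a₁a₃r₄ + a₂a₃r₃)/β, C₀,₁ := −(a₁a₂r₈ + a₁a₃r₇ + a₂²r₆ + a₂a₃r₅)/β, C₁,₀ := −(a₁a₂r₁₂ + a₁a₃r₁₁ + a₂²r₁₀ + a₂a₃r₉)/β, C₀,₀ := 1, C₋₁,−1 = C₋₁,₁ = C₁,−1 = C₁,₁ := 0. Then r_p > 0 for p = 1,…,12 and s_p < 0 for p = 1,…,4, hence β > 0, and the coefficients (C_{k,ℓ}) satisfy both the sign condition (C₀,₀ > 0 and C_{k,ℓ} ≤ 0 for (k,ℓ) ≠ (0,0)) and the summation condition ∑_{k,ℓ=−1}^{1} C_{k,ℓ} = 0, for all positive a₁, a₂, a₃, a₄ and all (w₁,w₂) ∈ (0,1)². -/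
open Finset

noncomputable def r1 (w₁ w₂ : ℝ) : ℝ := 2*w₂^2-w₂+1
noncomputable def r2 (w₁ w₂ : ℝ) : ℝ := -2*w₂^2+w₂+1
noncomputable def r3 (w₁ w₂ : ℝ) : ℝ := -2*w₁^2+w₁+1
noncomputable def r4 (w₁ w₂ : ℝ) : ℝ := 2*w₁^2-w₁+1
noncomputable def r5 (w₁ w₂ : ℝ) : ℝ := -w₂*(2*w₁^2-w₁-1)
noncomputable def r6 (w₁ w₂ : ℝ) : ℝ := (w₂-1)*(2*w₁^2-w₁-1)
noncomputable def r7 (w₁ w₂ : ℝ) : ℝ := w₂*(2*w₁^2-w₁+1)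
noncomputable def r8 (w₁ w₂ : ℝ) : ℝ := -(w₂-1)*(2*w₁^2-w₁+1)
noncomputable def r9 (w₁ w₂ : ℝ) : ℝ := -(2*w₂^2-w₂+1)*(w₁-1)
noncomputable def r10 (w₁ w₂ : ℝ) : ℝ := (2*w₂^2-w₂-1)*(w₁-1)
noncomputable def r11 (w₁ w₂ : ℝ) : ℝ := (2*w₂^2-w₂+1)*w₁
noncomputable def r12 (w₁ w₂ : ℝ) : ℝ := -(2*w₂^2-w₂-1)*w₁
noncomputable def s1 (w₁ w₂ : ℝ) : ℝ := 2*(w₁-1)*(w₁*w₂+w₂^2+w₁+1)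
noncomputable def s2 (w₁ w₂ : ℝ) : ℝ := 2*(1-w₂)*(w₁-1)*(w₁+w₂+1)
noncomputable def s3 (w₁ w₂ : ℝ) : ℝ := -2*(w₂+1)*w₁^2-2*(w₂^2-w₂)*w₁-2*w₂^2-2
noncomputable def s4 (w₁ w₂ : ℝ) : ℝ := 2*(w₂-1)*(w₁^2+w₁*w₂+w₂+1)

/-- `β = −(a₁a₂s₄ + a₁a₃s₃ + a₂²s₂ + a₂a₃s₁)`. -/
noncomputable def beta (a₁ a₂ a₃ w₁ w₂ : ℝ) : ℝ :=
  -(a₁*a₂*s4 w₁ w₂ + a₁*a₃*s3 w₁ w₂ + a₂^2*s2 w₁ w₂ + a₂*a₃*s1 w₁ w₂)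

/-- the second-order 9-point stencil coefficients at a grid point neighboring the
interface intersection point. -/
noncomputable def Ccross2 (a₁ a₂ a₃ w₁ w₂ : ℝ) : ℤ → ℤ → ℝ := fun k l =>
  if k = 0 ∧ l = 0 then 1
  else if k = -1 ∧ l = 0 then -(a₁*a₂*r2 w₁ w₂ + a₁*a₃*r1 w₁ w₂) / beta a₁ a₂ a₃ w₁ w₂
  else if k = 0 ∧ l = -1 then -(a₁*a₃*r4 w₁ w₂ + a₂*a₃*r3 w₁ w₂) / beta a₁ a₂ a₃ w₁ w₂
  else if k = 0 ∧ l = 1 then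
    -(a₁*a₂*r8 w₁ w₂ + a₁*a₃*r7 w₁ w₂ + a₂^2*r6 w₁ w₂ + a₂*a₃*r5 w₁ w₂) / beta a₁ a₂ a₃ w₁ w₂
  else if k = 1 ∧ l = 0 then
    -(a₁*a₂*r12 w₁ w₂ + a₁*a₃*r11 w₁ w₂ + a₂^2*r10 w₁ w₂ + a₂*a₃*r9 w₁ w₂) / beta a₁ a₂ a₃ w₁ w₂
  else 0

set_option maxHeartbeats 2000000 in
theorem stmt9 (w₁ w₂ : ℝ) (hw₁ : w₁ ∈ Set.Ioo (0 : ℝ) 1) (hw₂ : w₂ ∈ Set.Ioo (0 : ℝ) 1)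
    (a₁ a₂ a₃ a₄ : ℝ) (ha₁ : 0 < a₁) (ha₂ : 0 < a₂) (ha₃ : 0 < a₃) (ha₄ : 0 < a₄) :
    (0 < r1 w₁ w₂ ∧ 0 < r2 w₁ w₂ ∧ 0 < r3 w₁ w₂ ∧ 0 < r4 w₁ w₂ ∧ 0 < r5 w₁ w₂ ∧
      0 < r6 w₁ w₂ ∧ 0 < r7 w₁ w₂ ∧ 0 < r8 w₁ w₂ ∧ 0 < r9 w₁ w₂ ∧ 0 < r10 w₁ w₂ ∧
      0 < r11 w₁ w₂ ∧ 0 < r12 w₁ w₂) ∧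
    (s1 w₁ w₂ < 0 ∧ s2 w₁ w₂ < 0 ∧ s3 w₁ w₂ < 0 ∧ s4 w₁ w₂ < 0) ∧
    0 < beta a₁ a₂ a₃ w₁ w₂ ∧
    (0 < Ccross2 a₁ a₂ a₃ w₁ w₂ 0 0 ∧
      ∀ k ∈ Finset.Icc (-1 : ℤ) 1, ∀ l ∈ Finset.Icc (-1 : ℤ) 1,
        (k, l) ≠ (0, 0) → Ccross2 a₁ a₂ a₃ w₁ w₂ k l ≤ 0) ∧
    (∑ k ∈ Finset.Icc (-1 : ℤ) 1, ∑ l ∈ Finset.Icc (-1 : ℤ) 1,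
      Ccross2 a₁ a₂ a₃ w₁ w₂ k l) = 0 := by

  obtain ⟨h1, h2⟩ := hw₁
  obtain ⟨h3, h4⟩ := hw₂
  have hr1 : 0 < r1 w₁ w₂ := by unfold r1; nlinarith
  have hr2 : 0 < r2 w₁ w₂ := by unfold r2; nlinarith
  have hr3 : 0 < r3 w₁ w₂ := by unfold r3; nlinarith
  have hr4 : 0 < r4 w₁ w₂ := by unfold r4; nlinarith
  have hr3' : (0:ℝ) < -2*w₁^2+w₁+1 := hr3
  have hr2' : (0:ℝ) < -2*w₂^2+w₂+1 := hr2
  have hr5 : 0 < r5 w₁ w₂ := by unfold r5; nlinarith [mul_pos h3 hr3']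
  have hr6 : 0 < r6 w₁ w₂ := by unfold r6; nlinarith [mul_pos (by linarith : (0:ℝ) < 1 - w₂) hr3']
  have hr7 : 0 < r7 w₁ w₂ := by unfold r7; nlinarith
  have hr8 : 0 < r8 w₁ w₂ := by unfold r8; nlinarith
  have hr9 : 0 < r9 w₁ w₂ := by unfold r9; nlinarith
  have hr10 : 0 < r10 w₁ w₂ := by unfold r10; nlinarith [mul_pos (by linarith : (0:ℝ) < 1 - w₁) hr2']
  have hr11 : 0 < r11 w₁ w₂ := by unfold r11; nlinarith
  have hr12 : 0 < r12 w₁ w₂ := by unfold r12; nlinarith [mul_pos h1 hr2']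
  have hs1 : s1 w₁ w₂ < 0 := by
    unfold s1
    nlinarith [mul_pos (by linarith : (0:ℝ) < 1 - w₁)
      (by nlinarith : (0:ℝ) < w₁*w₂+w₂^2+w₁+1)]
  have hs2 : s2 w₁ w₂ < 0 := by
    unfold s2
    nlinarith [mul_pos (mul_pos (by linarith : (0:ℝ) < 1 - w₂)
      (by linarith : (0:ℝ) < 1 - w₁)) (by linarith : (0:ℝ) < w₁+w₂+1)]
  have hs3 : s3 w₁ w₂ < 0 := by unfold s3; nlinarith
  have hs4 : s4 w₁ w₂ < 0 := by
    unfold s4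
    nlinarith [mul_pos (by linarith : (0:ℝ) < 1 - w₂)
      (by nlinarith : (0:ℝ) < w₁^2+w₁*w₂+w₂+1)]
  have hβ : 0 < beta a₁ a₂ a₃ w₁ w₂ := by
    unfold beta
    have t1 := mul_pos (mul_pos ha₁ ha₂) (neg_pos.2 hs4)
    have t2 := mul_pos (mul_pos ha₁ ha₃) (neg_pos.2 hs3)
    have t3 := mul_pos (mul_pos (pow_pos ha₂ 2) (neg_pos.2 hs2)) (by norm_num : (0:ℝ) < 1)
    have t4 := mul_pos (mul_pos ha₂ ha₃) (neg_pos.2 hs1)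
    nlinarith [pow_pos ha₂ 2]
  have hβ' : beta a₁ a₂ a₃ w₁ w₂ ≠ 0 := ne_of_gt hβ
  refine ⟨⟨hr1, hr2, hr3, hr4, hr5, hr6, hr7, hr8, hr9, hr10, hr11, hr12⟩,
    ⟨hs1, hs2, hs3, hs4⟩, hβ, ⟨?_, ?_⟩, ?_⟩
  · simp [Ccross2]
  · intro k hk l hl hne
    simp only [Finset.mem_Icc] at hk hl
    obtain ⟨hk1, hk2⟩ := hk
    obtain ⟨hl1, hl2⟩ := hl
    have hN1 : 0 ≤ a₁*a₂*r2 w₁ w₂ + a₁*a₃*r1 w₁ w₂ := by positivity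
    have hN2 : 0 ≤ a₁*a₃*r4 w₁ w₂ + a₂*a₃*r3 w₁ w₂ := by positivity
    have hN3 : 0 ≤ a₁*a₂*r8 w₁ w₂ + a₁*a₃*r7 w₁ w₂ + a₂^2*r6 w₁ w₂ + a₂*a₃*r5 w₁ w₂ := by
      positivity
    have hN4 : 0 ≤ a₁*a₂*r12 w₁ w₂ + a₁*a₃*r11 w₁ w₂ + a₂^2*r10 w₁ w₂ + a₂*a₃*r9 w₁ w₂ := by
      positivity
    interval_cases k <;> interval_cases l <;> simp_all [Ccross2] <;>
      exact div_nonpos_of_nonpos_of_nonneg (by linarith) hβ.le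
  · have hIcc : Finset.Icc (-1 : ℤ) 1 = {-1, 0, 1} := by decide
    have key : (a₁*a₂*r2 w₁ w₂ + a₁*a₃*r1 w₁ w₂)
        + (a₁*a₃*r4 w₁ w₂ + a₂*a₃*r3 w₁ w₂)
        + (a₁*a₂*r8 w₁ w₂ + a₁*a₃*r7 w₁ w₂ + a₂^2*r6 w₁ w₂ + a₂*a₃*r5 w₁ w₂)
        + (a₁*a₂*r12 w₁ w₂ + a₁*a₃*r11 w₁ w₂ + a₂^2*r10 w₁ w₂ + a₂*a₃*r9 w₁ w₂)
        = beta a₁ a₂ a₃ w₁ w₂ := by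
      unfold beta r1 r2 r3 r4 r5 r6 r7 r8 r9 r10 r11 r12 s1 s2 s3 s4
      ring
    rw [hIcc]
    norm_num [Finset.sum_insert, Finset.mem_insert, Finset.mem_singleton,
      Finset.sum_singleton, Ccross2]
    field_simp
    linarith [key]
end

section
/- Let w₁, w₂ ∈ (0,1) and a₁, a₂, a₃ > 0. Define r₁ := 2w₂²−w₂+1, r₂ := −2w₂²+w₂+1, r₃ := −2w₁²+w₁+1, r₄ := 2w₁²−w₁+1, s₁ := 2(w₁−1)(w₁w₂+w₂²+w₁+1), s₂ := 2(1−w₂)(w₁−1)(w₁+w₂+1), s₃ := −2(w₂+1)w₁²−2(w₂²−w₂)w₁−2w₂²−2, s₄ := 2(w₂−1)(w₁²+w₁w₂+w₂+1), e₁ := 2w₁² + 4w₂² − w₁ − 2w₂ + 3, and set C₃ := (−a₁a₃e₁ − 2a₁a₂r₂ − a₂a₃r₃) / (a₁a₂s₄ + a₁a₃s₃ + a₂²s₂ + a₂a₃s₁) and C₄ := (1/12)·( −(a₂r₂ + a₃r₁)(a₁r₄ + a₂r₃) ) / (a₁a₂s₄ + a₁a₃s₃ + a₂²s₂ + a₂a₃s₁).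 Then e₁, r₁, r₂, r₃, r₄ are all positive and s₁, s₂, s₃, s₄ are all negative for every (w₁,w₂) ∈ (0,1)², and consequently C₃ > 0 and C₄ > 0. -/
noncomputable def e1 (w₁ w₂ : ℝ) : ℝ := 2*w₁^2+4*w₂^2-w₁-2*w₂+3

/-- the coefficient of `h⁻¹` in the discrete operator applied to the comparison function. -/
noncomputable def C3 (a₁ a₂ a₃ w₁ w₂ : ℝ) : ℝ :=
  (-a₁*a₃*e1 w₁ w₂ - 2*a₁*a₂*r2 w₁ w₂ - a₂*a₃*r3 w₁ w₂) /
    (a₁*a₂*s4 w₁ w₂ + a₁*a₃*s3 w₁ w₂ + a₂^2*s2 w₁ w₂ + a₂*a₃*s1 w₁ w₂)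

/-- the coefficient of `h` in the discrete operator applied to the comparison function. -/
noncomputable def C4 (a₁ a₂ a₃ w₁ w₂ : ℝ) : ℝ :=
  (1/12) * (-(a₂*r2 w₁ w₂ + a₃*r1 w₁ w₂) * (a₁*r4 w₁ w₂ + a₂*r3 w₁ w₂)) /
    (a₁*a₂*s4 w₁ w₂ + a₁*a₃*s3 w₁ w₂ + a₂^2*s2 w₁ w₂ + a₂*a₃*s1 w₁ w₂)

theorem stmt17 (w₁ w₂ : ℝ) (hw₁ : w₁ ∈ Set.Ioo (0 : ℝ) 1) (hw₂ : w₂ ∈ Set.Ioo (0 : ℝ) 1)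
    (a₁ a₂ a₃ : ℝ) (ha₁ : 0 < a₁) (ha₂ : 0 < a₂) (ha₃ : 0 < a₃) :
    (0 < e1 w₁ w₂ ∧ 0 < r1 w₁ w₂ ∧ 0 < r2 w₁ w₂ ∧ 0 < r3 w₁ w₂ ∧ 0 < r4 w₁ w₂) ∧
    (s1 w₁ w₂ < 0 ∧ s2 w₁ w₂ < 0 ∧ s3 w₁ w₂ < 0 ∧ s4 w₁ w₂ < 0) ∧
    0 < C3 a₁ a₂ a₃ w₁ w₂ ∧ 0 < C4 a₁ a₂ a₃ w₁ w₂ := by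
  obtain ⟨h1, h2⟩ := hw₁
  obtain ⟨h3, h4⟩ := hw₂
  have he1 : 0 < e1 w₁ w₂ := by unfold e1; nlinarith [sq_nonneg (2*w₁-1), sq_nonneg (2*w₂-1)]
  have hr1 : 0 < r1 w₁ w₂ := by unfold r1; nlinarith [sq_nonneg (2*w₂-1)]
  have hr2 : 0 < r2 w₁ w₂ := by unfold r2; nlinarith
  have hr3 : 0 < r3 w₁ w₂ := by unfold r3; nlinarith
  have hr4 : 0 < r4 w₁ w₂ := by unfold r4; nlinarith [sq_nonneg (2*w₁-1)]
  have hs1 : s1 w₁ w₂ < 0 := by unfold s1; nlinarith [mul_pos (show (0:ℝ) < 1-w₁ by linarith) (show (0:ℝ) < w₁*w₂+w₂^2+w₁+1 by nlinarith)]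
  have hs2 : s2 w₁ w₂ < 0 := by unfold s2; nlinarith [mul_pos (mul_pos (show (0:ℝ) < 1-w₂ by linarith) (show (0:ℝ) < 1-w₁ by linarith)) (show (0:ℝ) < w₁+w₂+1 by linarith)]
  have hs3 : s3 w₁ w₂ < 0 := by unfold s3; nlinarith [sq_nonneg (w₁-w₂), sq_nonneg w₁, sq_nonneg w₂]
  have hs4 : s4 w₁ w₂ < 0 := by unfold s4; nlinarith [mul_pos (show (0:ℝ) < 1-w₂ by linarith) (show (0:ℝ) < w₁^2+w₁*w₂+w₂+1 by nlinarith)]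
  have hden : a₁*a₂*s4 w₁ w₂ + a₁*a₃*s3 w₁ w₂ + a₂^2*s2 w₁ w₂ + a₂*a₃*s1 w₁ w₂ < 0 := by
    have := mul_pos ha₁ ha₂
    have := mul_pos ha₁ ha₃
    have := mul_pos (mul_pos ha₂ ha₂) (neg_pos.mpr hs2)
    nlinarith [mul_pos (mul_pos ha₁ ha₂) (neg_pos.mpr hs4),
      mul_pos (mul_pos ha₁ ha₃) (neg_pos.mpr hs3),
      mul_pos (mul_pos ha₂ ha₃) (neg_pos.mpr hs1), sq_nonneg a₂]
  refine ⟨⟨he1, hr1, hr2, hr3, hr4⟩, ⟨hs1, hs2, hs3, hs4⟩, ?_, ?_⟩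
  · apply div_pos_of_neg_of_neg _ hden
    nlinarith [mul_pos (mul_pos ha₁ ha₃) he1, mul_pos (mul_pos ha₁ ha₂) hr2,
      mul_pos (mul_pos ha₂ ha₃) hr3]
  · apply div_pos_of_neg_of_neg _ hden
    have hA : 0 < a₂*r2 w₁ w₂ + a₃*r1 w₁ w₂ := by positivity
    have hB : 0 < a₁*r4 w₁ w₂ + a₂*r3 w₁ w₂ := by positivity
    nlinarith [mul_pos hA hB]
end
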